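/- (Combined consistency-error estimate, estimate (4.13) of the paper.) Define the consistency discrepancy D(w, r, v) := a_h(w,v) − a(w,v) + ⟨P v − v, B r⟩ (this equals (𝒜_h − 𝒜)((w,r),(v,q)) in the paper, since the divergence and reaction terms of 𝒜_h and 𝒜 coincide). Then for all w, v ∈ H and r ∈ H' one has |D(w, r, v)| ≤ ( (2 + α^*) ν_max ‖w − P w‖ + ‖N w − P(N w)‖ + ‖B r − P(B r)‖ ) · ‖v‖. -/

import Mathlib

open scoped RealInnerProductSpace

/-!
Write `P` for the orthogonal projection onto `K`. Adding and subtracting `⟪N w, P v⟫`,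
`D(w, r, v) = ⟪N (P w - w), P v⟫ + ⟪N w, P v - v⟫ + S (w - P w) (v - P v) + ⟪P v - v, B r⟫`.
Since `P v - v ⟂ K`, in the two inner products against `P v - v` the other factor may be replaced
by its component orthogonal to `K`; this produces `‖N w - P (N w)‖` and `‖B r - P (B r)‖`.
The stabilisation term is bounded by Cauchy–Schwarz for the positive semidefinite form `S`,
which is dominated by `α^* ν_max ‖·‖²`; throughout, `‖P v‖ ≤ ‖v‖` and `‖v - P v‖ ≤ ‖v‖`.
-/

namespace LinearMap.BilinForm

theorem abs_apply_le_of_apply_self_le {E : Type*} [SeminormedAddCommGroup E] [Module ℝ E]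
    (S : E →ₗ[ℝ] E →ₗ[ℝ] ℝ) (hS : ∀ x y, S x y = S y x) (hS₀ : ∀ x, 0 ≤ S x x)
    {C : ℝ} (hC₀ : 0 ≤ C) (hC : ∀ x, S x x ≤ C * ‖x‖ ^ 2) (x y : E) :
    |S x y| ≤ C * ‖x‖ * ‖y‖ := by
  have hsq : S x y ^ 2 ≤ (C * ‖x‖ * ‖y‖) ^ 2 :=
    calc S x y ^ 2 = S x y * S y x := by rw [sq, hS y x]
      _ ≤ S x x * S y y := apply_mul_apply_le_of_forall_zero_le S hS₀ x y
      _ ≤ (C * ‖x‖ ^ 2) * (C * ‖y‖ ^ 2) := mul_le_mul (hC x) (hC y) (hS₀ y) (hS₀ x |>.trans (hC x))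
      _ = (C * ‖x‖ * ‖y‖) ^ 2 := by ring
  exact abs_le_of_sq_le_sq hsq (by positivity)

theorem abs_apply_le_of_apply_self_le_inner_map {H : Type*} [NormedAddCommGroup H]
    [InnerProductSpace ℝ H] (S : H →ₗ[ℝ] H →ₗ[ℝ] ℝ) (hS : ∀ x y, S x y = S y x)
    (hS₀ : ∀ x, 0 ≤ S x x) (N : H →L[ℝ] H) {α c : ℝ} (hα : 0 ≤ α) (hc : 0 ≤ c)
    (hSN : ∀ x, S x x ≤ α * ⟪N x, x⟫) (hN : ∀ x, ‖N x‖ ≤ c * ‖x‖) (x y : H) :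
    |S x y| ≤ α * c * ‖x‖ * ‖y‖ := by
  refine abs_apply_le_of_apply_self_le S hS hS₀ (by positivity) (fun z => ?_) x y
  calc S z z ≤ α * ⟪N z, z⟫ := hSN z
    _ ≤ α * (‖N z‖ * ‖z‖) := by gcongr; exact real_inner_le_norm _ _
    _ ≤ α * (c * ‖z‖ * ‖z‖) := by gcongr; exact hN z
    _ = α * c * ‖z‖ ^ 2 := by ring

end LinearMap.BilinForm

namespace Submodule

variable {H : Type*} [NormedAddCommGroup H] [InnerProductSpace ℝ H]
  (K : Submodule ℝ H) [K.HasOrthogonalProjection]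

theorem norm_sub_starProjection_le (v : H) : ‖v - K.starProjection v‖ ≤ ‖v‖ := by
  simpa using Kᗮ.norm_starProjection_apply_le v

theorem inner_starProjection_sub_self (u v : H) :
    ⟪u, K.starProjection v - v⟫ = ⟪u - K.starProjection u, K.starProjection v - v⟫ := by
  have hperp : ⟪K.starProjection u, K.starProjection v - v⟫ = 0 := by
    rw [← neg_sub, inner_neg_right, inner_eq_zero_symm.mp
      (K.starProjection_inner_eq_zero v _ (K.starProjection_apply_mem u)), neg_zero]
  rw [inner_sub_left, hperp, sub_zero]

theorem abs_inner_starProjection_sub_self_le (u v : H) :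
    |⟪u, K.starProjection v - v⟫| ≤ ‖u - K.starProjection u‖ * ‖v‖ := by
  rw [K.inner_starProjection_sub_self]
  calc _ ≤ ‖u - K.starProjection u‖ * ‖K.starProjection v - v‖ := abs_real_inner_le_norm _ _
    _ ≤ _ := by rw [norm_sub_rev (K.starProjection v)]; gcongr; exact K.norm_sub_starProjection_le v

end Submodule

theorem vem_consistency_error_4_13_general
    {H : Type*} [NormedAddCommGroup H] [InnerProductSpace ℝ H]
    {H' : Type*} [NormedAddCommGroup H'] [InnerProductSpace ℝ H']
    (K : Submodule ℝ H) [K.HasOrthogonalProjection]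
    (P : H →L[ℝ] H) (hP : ∀ v : H, P v = (K.orthogonalProjectionOnto v : H))
    (N : H →L[ℝ] H)
    (νmin νmax : ℝ) (hνmin : 0 < νmin) (hνν : νmin ≤ νmax)
    (hNlow : ∀ v : H, νmin * ‖v‖ ^ 2 ≤ ⟪N v, v⟫)
    (hNhigh : ∀ v : H, ‖N v‖ ≤ νmax * ‖v‖)
    (S : H →ₗ[ℝ] H →ₗ[ℝ] ℝ) (hSsymm : ∀ v w : H, S v w = S w v)
    (αs αS : ℝ) (hαs : 0 < αs) (hαα : αs ≤ αS)
    (hSlow : ∀ v : H, αs * ⟪N v, v⟫ ≤ S v v)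
    (hShigh : ∀ v : H, S v v ≤ αS * ⟪N v, v⟫)
    (ah : H → H → ℝ)
    (hah : ∀ v w : H, ah v w = ⟪N (P v), P w⟫ + S (v - P v) (w - P w))
    (B : H' →L[ℝ] H)
    (D : H → H' → H → ℝ)
    (hD : ∀ (w : H) (r : H') (v : H),
      D w r v = ah w v - ⟪N w, v⟫ + ⟪P v - v, B r⟫) :
    ∀ (w : H) (r : H') (v : H),
      |D w r v|
        ≤ ((2 + αS) * νmax * ‖w - P w‖ + ‖N w - P (N w)‖ + ‖B r - P (B r)‖) * ‖v‖ := by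
  obtain rfl : P = K.starProjection := ContinuousLinearMap.ext hP
  intro w r v
  set P := K.starProjection
  have hνmax : 0 ≤ νmax := hνmin.le.trans hνν
  have hαS : 0 ≤ αS := hαs.le.trans hαα
  have hS₀ (x : H) : 0 ≤ S x x :=
    (mul_nonneg hαs.le ((by positivity : 0 ≤ νmin * ‖x‖ ^ 2).trans (hNlow x))).trans (hSlow x)
  have hSbound : |S (w - P w) (v - P v)| ≤ αS * νmax * ‖w - P w‖ * ‖v‖ :=
    (LinearMap.BilinForm.abs_apply_le_of_apply_self_le_inner_map S hSsymm hS₀ N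
      hαS hνmax hShigh hNhigh _ _).trans
      (by gcongr; exact K.norm_sub_starProjection_le v)
  have hNbound : |⟪N (P w - w), P v⟫| ≤ νmax * ‖w - P w‖ * ‖v‖ :=
    calc _ ≤ ‖N (P w - w)‖ * ‖P v‖ := abs_real_inner_le_norm _ _
      _ ≤ νmax * ‖w - P w‖ * ‖v‖ := by
        rw [← norm_sub_rev]
        gcongr
        exacts [hNhigh _, K.norm_starProjection_apply_le v]
  have hNcbound : |⟪N w, P v - v⟫| ≤ ‖N w - P (N w)‖ * ‖v‖ :=
    K.abs_inner_starProjection_sub_self_le (N w) v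
  have hBbound : |⟪P v - v, B r⟫| ≤ ‖B r - P (B r)‖ * ‖v‖ := by
    rw [real_inner_comm]; exact K.abs_inner_starProjection_sub_self_le (B r) v
  have hsplit : ⟪N (P w), P v⟫ - ⟪N w, v⟫ = ⟪N (P w - w), P v⟫ + ⟪N w, P v - v⟫ := by
    simp only [map_sub, inner_sub_left, inner_sub_right]
    ring
  have hslack : 0 ≤ νmax * ‖w - P w‖ * ‖v‖ := by positivity
  rw [hD, hah]
  rw [abs_le] at hSbound hNbound hNcbound hBbound ⊢
  constructor <;> linarith

/-- **Combined consistency-error estimate** (estimate (4.13) of the paper).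
With `D(w, r, v) := a_h(w,v) − a(w,v) + ⟪P v − v, B r⟫`, one has
`|D(w, r, v)| ≤ ((2 + α^*) ν_max ‖w − P w‖ + ‖N w − P(N w)‖ + ‖B r − P(B r)‖) ‖v‖`. -/
theorem vem_consistency_error_4_13
    {H : Type*} [NormedAddCommGroup H] [InnerProductSpace ℝ H]
    {H' : Type*} [NormedAddCommGroup H'] [InnerProductSpace ℝ H']
    (K : Submodule ℝ H) [K.HasOrthogonalProjection]
    (P : H →L[ℝ] H) (hP : ∀ v : H, P v = (K.orthogonalProjectionOnto v : H))
    (N : H →L[ℝ] H) (hNsa : ∀ v w : H, ⟪N v, w⟫ = ⟪v, N w⟫)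
    (νmin νmax : ℝ) (hνmin : 0 < νmin) (hνν : νmin ≤ νmax)
    (hNlow : ∀ v : H, νmin * ‖v‖ ^ 2 ≤ ⟪N v, v⟫)
    (hNhigh : ∀ v : H, ‖N v‖ ≤ νmax * ‖v‖)
    (S : H →ₗ[ℝ] H →ₗ[ℝ] ℝ) (hSsymm : ∀ v w : H, S v w = S w v)
    (αs αS : ℝ) (hαs : 0 < αs) (hαα : αs ≤ αS)
    (hSlow : ∀ v : H, αs * ⟪N v, v⟫ ≤ S v v)
    (hShigh : ∀ v : H, S v v ≤ αS * ⟪N v, v⟫)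
    (ah : H → H → ℝ)
    (hah : ∀ v w : H, ah v w = ⟪N (P v), P w⟫ + S (v - P v) (w - P w))
    (B : H' →L[ℝ] H)
    (D : H → H' → H → ℝ)
    (hD : ∀ (w : H) (r : H') (v : H),
      D w r v = ah w v - ⟪N w, v⟫ + ⟪P v - v, B r⟫) :
    ∀ (w : H) (r : H') (v : H),
      |D w r v|
        ≤ ((2 + αS) * νmax * ‖w - P w‖ + ‖N w - P (N w)‖ + ‖B r - P (B r)‖) * ‖v‖ :=
  vem_consistency_error_4_13_general K P hP N νmin νmax hνmin hνν hNlow hNhigh S hSsymm αs αS hαs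
    hαα hSlow hShigh ah hah B D hD
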